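/- arXiv:1703.06998 — 7 statements merged into one kernel-verified Lean document; each statement's English description precedes it below -/
import Mathlib

section
/- Let H1, H2 be Hilbert spaces and B : H1 × H2 → ℂ a bounded bilinear form that is coercive in the sense that there exists λ > 0 with sup_{w ∈ H1, w ≠ 0} |B(w,v)|/‖w‖ ≥ λ‖v‖ for all v ∈ H2 and sup_{w ∈ H2, w ≠ 0} |B(u,w)|/‖w‖ ≥ λ‖u‖ for all u ∈ H1. Then for every bounded linear functional T on H1 there exists a unique u_T ∈ H2 such that B(v, u_T) = conj(T(v)) for all v ∈ H1, and moreover ‖u_T‖_{H2} ≤ (1/λ)‖T‖. -/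
/-!
Realise `B` as `⟪v, A u⟫ = B v u` for an operator `A : H2 →L[ℂ] H1` (the adjoint of the Riesz
operator `H1 → H2` of `B`); with `t` the Riesz vector of `T`, the equation becomes `A u = t`.
The first inf-sup condition bounds `A` below by `λ`, which gives uniqueness, the norm bound and a
closed range; the second bounds `A†` below, so `(range A)ᗮ = ker A† = 0` and `A` is onto.
-/

open InnerProductSpace ContinuousLinearMap
open scoped InnerProduct

section

variable {𝕜 E F : Type*} [RCLike 𝕜]
  [NormedAddCommGroup E] [InnerProductSpace 𝕜 E] [NormedAddCommGroup F] [InnerProductSpace 𝕜 F]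

noncomputable def continuousLinearMapOfSesqForm [CompleteSpace F] (B : E →L⋆[𝕜] F →L[𝕜] 𝕜) :
    E →L[𝕜] F :=
  (toDual 𝕜 F).symm.toContinuousLinearEquiv.toContinuousLinearMap.comp B

@[simp]
theorem inner_continuousLinearMapOfSesqForm_apply [CompleteSpace F] (B : E →L⋆[𝕜] F →L[𝕜] 𝕜)
    (v : E) (w : F) : ⟪continuousLinearMapOfSesqForm B v, w⟫_𝕜 = B v w := by
  simp [continuousLinearMapOfSesqForm]

variable (𝕜) in
theorem iSup_norm_inner_div_norm_le_left (x : E) :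
    ⨆ w : {w : E // w ≠ 0}, ‖⟪x, w.1⟫_𝕜‖ / ‖w.1‖ ≤ ‖x‖ :=
  Real.iSup_le (fun w => div_le_of_le_mul₀ (norm_nonneg _) (norm_nonneg _)
    (norm_inner_le_norm x w.1)) (norm_nonneg x)

variable (𝕜) in
theorem iSup_norm_inner_div_norm_le_right (x : E) :
    ⨆ w : {w : E // w ≠ 0}, ‖⟪w.1, x⟫_𝕜‖ / ‖w.1‖ ≤ ‖x‖ :=
  Real.iSup_le (fun w => div_le_of_le_mul₀ (norm_nonneg _) (norm_nonneg _)
    ((norm_inner_le_norm w.1 x).trans_eq (mul_comm _ _))) (norm_nonneg x)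

theorem ContinuousLinearMap.antilipschitz_of_mul_norm_le {S : E →L[𝕜] F} {c : ℝ} (hc : 0 < c)
    (hS : ∀ x, c * ‖x‖ ≤ ‖S x‖) : AntilipschitzWith (Real.toNNReal c⁻¹) S :=
  S.antilipschitz_of_bound fun x => by
    rw [Real.coe_toNNReal _ (inv_nonneg.mpr hc.le), inv_mul_eq_div, le_div_iff₀ hc, mul_comm]
    exact hS x

theorem ContinuousLinearMap.range_eq_top_of_antilipschitz_of_ker_adjoint_eq_bot
    [CompleteSpace E] [CompleteSpace F] {S : E →L[𝕜] F} {K : NNReal}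
    (hS : AntilipschitzWith K S) (hker : (S†).ker = ⊥) : S.range = ⊤ := by
  have : CompleteSpace S.range := (hS.isClosed_range S.uniformContinuous).completeSpace_coe
  rw [← Submodule.orthogonal_eq_bot_iff, orthogonal_range, hker]

end

/-- The Babuška–Lax–Milgram theorem: if `B` is a bounded sesquilinear form on a pair of
complex Hilbert spaces satisfying the two-sided inf-sup (coercivity) conditions with
constant `lam > 0`, then every bounded linear functional `T` on `H1` admits a unique
`u_T ∈ H2` with `B v u_T = conj (T v)` for all `v`, and `‖u_T‖ ≤ (1/lam) * ‖T‖`. -/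
theorem babuska_lax_milgram
    {H1 : Type*} [NormedAddCommGroup H1] [InnerProductSpace ℂ H1] [CompleteSpace H1]
    {H2 : Type*} [NormedAddCommGroup H2] [InnerProductSpace ℂ H2] [CompleteSpace H2]
    (B : H1 →ₗ⋆[ℂ] H2 →ₗ[ℂ] ℂ) (Cb lam : ℝ)
    (hCb : ∀ (u : H1) (v : H2), ‖B u v‖ ≤ Cb * ‖u‖ * ‖v‖)
    (hlam : 0 < lam)
    (hcoer1 : ∀ v : H2, lam * ‖v‖ ≤ ⨆ w : {w : H1 // w ≠ 0}, ‖B w.1 v‖ / ‖w.1‖)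
    (hcoer2 : ∀ u : H1, lam * ‖u‖ ≤ ⨆ w : {w : H2 // w ≠ 0}, ‖B u w.1‖ / ‖w.1‖)
    (T : H1 →L[ℂ] ℂ) :
    (∃! u : H2, ∀ v : H1, B v u = (starRingEnd ℂ) (T v)) ∧
      ∀ u : H2, (∀ v : H1, B v u = (starRingEnd ℂ) (T v)) → ‖u‖ ≤ (1 / lam) * ‖T‖ := by
  set R := continuousLinearMapOfSesqForm (B.mkContinuous₂ Cb hCb)
  have hR : ∀ v w, ⟪R v, w⟫_ℂ = B v w := by simp [R]
  have hA : ∀ v w, ⟪v, (R†) w⟫_ℂ = B v w := by simp [adjoint_inner_right, hR]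
  have hA_below : ∀ u, lam * ‖u‖ ≤ ‖(R†) u‖ := fun u =>
    (hcoer1 u).trans (by simpa only [hA] using iSup_norm_inner_div_norm_le_right ℂ ((R†) u))
  have hR_below : ∀ u, lam * ‖u‖ ≤ ‖R u‖ := fun u =>
    (hcoer2 u).trans (by simpa only [hR] using iSup_norm_inner_div_norm_le_left ℂ (R u))
  have hA_anti := antilipschitz_of_mul_norm_le hlam hA_below
  have hA_range := range_eq_top_of_antilipschitz_of_ker_adjoint_eq_bot hA_anti (by
    rw [adjoint_adjoint, LinearMap.ker_eq_bot]
    exact (antilipschitz_of_mul_norm_le hlam hR_below).injective)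
  set t := (toDual ℂ H1).symm T
  have ht : ∀ v, ⟪v, t⟫_ℂ = starRingEnd ℂ (T v) := fun v => by
    rw [← inner_conj_symm, toDual_symm_apply]
  have hsol : ∀ u, (∀ v, B v u = starRingEnd ℂ (T v)) ↔ (R†) u = t := fun u => by
    simp only [← hA, ← ht]
    exact ⟨ext_inner_left ℂ, fun h v => by rw [h]⟩
  obtain ⟨u₀, hu₀⟩ := LinearMap.range_eq_top.mp hA_range t
  refine ⟨⟨u₀, (hsol u₀).mpr hu₀,
    fun u hu => hA_anti.injective (((hsol u).mp hu).trans hu₀.symm)⟩, fun u hu => ?_⟩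
  have hbound := hA_below u
  rw [(hsol u).mp hu, LinearIsometryEquiv.norm_map] at hbound
  rw [one_div, inv_mul_eq_div, le_div_iff₀ hlam, mul_comm]
  exact hbound
end

section
/- Assume the abstract layer-potential setting: Hilbert spaces H1, H2, bounded coercive bilinear form B (constant λ) split as B = B^Ω + B^C via restriction maps, a bounded trace Tr2 : H2 → D̂2, and the extension condition: if Tr2 φ = Tr2 ψ then there exists w ∈ H2 with w|_Ω = φ|_Ω, w|_C = ψ|_C, and Tr2 w = Tr2 φ. For f in the trace space D2, define D^B_Ω f = −F|_Ω + P(L(1_Ω F))|_Ω for any F ∈ H2 with Tr2 F = f. Then D^B_Ω f is well defined, i.e., independent of the choice of F with Tr2 F = f. -/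
/-- Well-definedness of the double layer potential: in the abstract layer-potential
setting (bounded coercive `B` split as `B^Ω + B^C` via restriction maps, bounded trace
`Tr2`, and the trace extension condition), the quantity
`D^B_Ω f = (-F + P (L(1_Ω F)))|_Ω` does not depend on the choice of `F ∈ H2` with
`Tr2 F = f`. -/
theorem double_layer_well_defined
    {H1 : Type*} [NormedAddCommGroup H1] [InnerProductSpace ℂ H1] [CompleteSpace H1]
    {H2 : Type*} [NormedAddCommGroup H2] [InnerProductSpace ℂ H2] [CompleteSpace H2]
    {HO1 HO2 HC1 HC2 D2 : Type*}
    [AddCommGroup HO1] [Module ℂ HO1] [AddCommGroup HO2] [Module ℂ HO2]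
    [AddCommGroup HC1] [Module ℂ HC1] [AddCommGroup HC2] [Module ℂ HC2]
    [AddCommGroup D2] [Module ℂ D2]
    (B : H1 →ₗ[ℂ] H2 →ₗ[ℂ] ℂ) (Cb lam : ℝ)
    (hCb : ∀ (u : H1) (v : H2), ‖B u v‖ ≤ Cb * ‖u‖ * ‖v‖)
    (hlam : 0 < lam)
    (hcoer1 : ∀ v : H2, lam * ‖v‖ ≤ ⨆ w : {w : H1 // w ≠ 0}, ‖B w.1 v‖ / ‖w.1‖)
    (hcoer2 : ∀ u : H1, lam * ‖u‖ ≤ ⨆ w : {w : H2 // w ≠ 0}, ‖B u w.1‖ / ‖w.1‖)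
    (RO1 : H1 →ₗ[ℂ] HO1) (RO2 : H2 →ₗ[ℂ] HO2)
    (RC1 : H1 →ₗ[ℂ] HC1) (RC2 : H2 →ₗ[ℂ] HC2)
    (BO : HO1 →ₗ[ℂ] HO2 →ₗ[ℂ] ℂ) (BC : HC1 →ₗ[ℂ] HC2 →ₗ[ℂ] ℂ)
    (hsplit : ∀ (u : H1) (v : H2), B u v = BO (RO1 u) (RO2 v) + BC (RC1 u) (RC2 v))
    (Tr2 : H2 →ₗ[ℂ] D2)
    (hext : ∀ φ ψ : H2, Tr2 φ = Tr2 ψ →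
      ∃ w : H2, RO2 w = RO2 φ ∧ RC2 w = RC2 ψ ∧ Tr2 w = Tr2 φ)
    (P : (H1 →L[ℂ] ℂ) → H2)
    (hP : ∀ (H : H1 →L[ℂ] ℂ) (φ : H1), B φ (P H) = H φ)
    (LO LC : H2 → (H1 →L[ℂ] ℂ))
    (hLO : ∀ (F : H2) (φ : H1), (LO F) φ = BO (RO1 φ) (RO2 F))
    (hLC : ∀ (F : H2) (φ : H1), (LC F) φ = BC (RC1 φ) (RC2 F)) :
    ∀ F F' : H2, Tr2 F = Tr2 F' →
      RO2 (-F + P (LO F)) = RO2 (-F' + P (LO F')) := by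
  -- If B φ v = 0 for all φ, then v = 0.
  have hinj : ∀ v : H2, (∀ φ : H1, B φ v = 0) → v = 0 := by
    intro v hv
    have h2 : (⨆ w : {w : H1 // w ≠ 0}, ‖B w.1 v‖ / ‖w.1‖) ≤ 0 := by
      apply Real.iSup_nonpos
      intro w
      simp [hv w.1]
    have h3 : lam * ‖v‖ ≤ 0 := (hcoer1 v).trans h2
    have hn : ‖v‖ = 0 := le_antisymm (nonpos_of_mul_nonpos_right h3 hlam) (norm_nonneg v)
    exact norm_eq_zero.mp hn
  -- decomposition: P (LO G) + P (LC G) = G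
  have hdecomp : ∀ G : H2, P (LO G) + P (LC G) = G := by
    intro G
    have hz : ∀ φ : H1, B φ (P (LO G) + P (LC G) - G) = 0 := by
      intro φ
      have hs := hsplit φ G
      have h1 : (B φ) (P (LO G) + P (LC G) - G)
          = (B φ) (P (LO G)) + (B φ) (P (LC G)) - (B φ) G := by
        simp [map_add, map_sub]
      rw [h1, hP, hP, hLO, hLC, hs]
      ring
    exact sub_eq_zero.mp (hinj _ hz)
  intro F F' h
  obtain ⟨w, hwO, hwC, hwT⟩ := hext F' F h.symm
  have hw : P (LO F') + P (LC F) = w := by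
    have hd := hdecomp w
    rw [show LO w = LO F' from ContinuousLinearMap.ext fun φ => by rw [hLO, hLO, hwO],
        show LC w = LC F from ContinuousLinearMap.ext fun φ => by rw [hLC, hLC, hwC]] at hd
    exact hd
  have e1 : RO2 (P (LO F')) + RO2 (P (LC F)) = RO2 F' := by
    rw [← map_add, hw, hwO]
  have e2 : RO2 (P (LO F')) + RO2 (P (LC F')) = RO2 F' := by
    rw [← map_add, hdecomp F']
  have e3 : RO2 (P (LC F)) = RO2 (P (LC F')) := add_left_cancel (e1.trans e2.symm)
  have hF : -F + P (LO F) = -(P (LC F)) := by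
    have h5 : F - P (LO F) = P (LC F) := by
      rw [sub_eq_iff_eq_add']; exact (hdecomp F).symm
    rw [← h5]; abel
  have hF' : -F' + P (LO F') = -(P (LC F')) := by
    have h5 : F' - P (LO F') = P (LC F') := by
      rw [sub_eq_iff_eq_add']; exact (hdecomp F').symm
    rw [← h5]; abel
  rw [hF, hF', map_neg, map_neg, e3]
end

section
/- In the abstract layer-potential setting, for every f ∈ D2 and every φ ∈ H1, B^Ω(φ|_Ω, D^B_Ω f) − B^C(φ|_C, D^B_C f) = 0. In particular (L(D^B_Ω f))|_Ω = 0, i.e., B^Ω(φ|_Ω, D^B_Ω f) = 0 for all φ ∈ H1 with Tr1 φ = 0. -/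
/-- The double layer potential is a solution: with
`D^B_Ω f = (-F + P (L(1_Ω F)))|_Ω` and `D^B_C f = (-(P (L(1_Ω F))))|_C` for `F ∈ H2`
with `Tr2 F = f`, one has `B^Ω(φ|_Ω, D^B_Ω f) - B^C(φ|_C, D^B_C f) = 0` for every
`φ ∈ H1`; in particular `B^Ω(φ|_Ω, D^B_Ω f) = 0` whenever `Tr1 φ = 0`. -/
theorem double_layer_is_solution
    {H1 : Type*} [NormedAddCommGroup H1] [InnerProductSpace ℂ H1] [CompleteSpace H1]
    {H2 : Type*} [NormedAddCommGroup H2] [InnerProductSpace ℂ H2] [CompleteSpace H2]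
    {HO1 HO2 HC1 HC2 : Type*}
    [AddCommGroup HO1] [Module ℂ HO1] [AddCommGroup HO2] [Module ℂ HO2]
    [AddCommGroup HC1] [Module ℂ HC1] [AddCommGroup HC2] [Module ℂ HC2]
    {D1 D2 : Type*} [NormedAddCommGroup D1] [NormedSpace ℂ D1]
    [AddCommGroup D2] [Module ℂ D2]
    (B : H1 →ₗ[ℂ] H2 →ₗ[ℂ] ℂ)
    (RO1 : H1 →ₗ[ℂ] HO1) (RO2 : H2 →ₗ[ℂ] HO2)
    (RC1 : H1 →ₗ[ℂ] HC1) (RC2 : H2 →ₗ[ℂ] HC2)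
    (BO : HO1 →ₗ[ℂ] HO2 →ₗ[ℂ] ℂ) (BC : HC1 →ₗ[ℂ] HC2 →ₗ[ℂ] ℂ)
    (hsplit : ∀ (u : H1) (v : H2), B u v = BO (RO1 u) (RO2 v) + BC (RC1 u) (RC2 v))
    (Tr1 : H1 →ₗ[ℂ] D1) (Tr2 : H2 →ₗ[ℂ] D2)
    (hext1 : ∀ φp : H1, Tr1 φp = 0 →
      ∃ φ : H1, RO1 φ = RO1 φp ∧ RC1 φ = 0 ∧ Tr1 φ = 0)
    (P : (H1 →L[ℂ] ℂ) → H2)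
    (hP : ∀ (H : H1 →L[ℂ] ℂ) (φ : H1), B φ (P H) = H φ)
    (LO : H2 → (H1 →L[ℂ] ℂ))
    (hLO : ∀ (F : H2) (φ : H1), (LO F) φ = BO (RO1 φ) (RO2 F)) :
    (∀ (F : H2) (φ : H1),
        BO (RO1 φ) (RO2 (-F + P (LO F))) - BC (RC1 φ) (RC2 (-(P (LO F)))) = 0) ∧
    (∀ (F : H2) (φ : H1), Tr1 φ = 0 →
        BO (RO1 φ) (RO2 (-F + P (LO F))) = 0) := by
  have key : ∀ (F : H2) (φ : H1),
      BO (RO1 φ) (RO2 (-F + P (LO F))) - BC (RC1 φ) (RC2 (-(P (LO F)))) = 0 := by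
    intro F φ
    have h1 := hsplit φ (P (LO F))
    have h2 := hP (LO F) φ
    have h3 := hLO F φ
    simp only [map_add, map_neg, LinearMap.add_apply, LinearMap.neg_apply] at *
    linear_combination -h1 + h2 + h3
  refine ⟨key, fun F φ hφ => ?_⟩
  obtain ⟨ψ, hO, hC, hTr⟩ := hext1 φ hφ
  have := key F ψ
  rw [hO, hC] at this
  simpa using this
end

section
/- Green's formula for abstract layer potentials: if u ∈ H2^Ω with (Lu)|_Ω = 0 and U ∈ H2 satisfies U|_Ω = u, then u = −D^B_Ω(Tr2 U) + S(M^B_Ω u)|_Ω and 0 = D^B_C(Tr2 U) + S(M^B_Ω u)|_C. -/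
/-- Green's formula for abstract layer potentials: if `u ∈ H2^Ω` with `(Lu)|_Ω = 0`,
`U ∈ H2` satisfies `U|_Ω = u`, `Mu = M^B_Ω u` is the Neumann trace, and
`SMu = S (M^B_Ω u)` is the single layer potential of the Neumann data, then
`u = -D^B_Ω (Tr2 U) + (S (M^B_Ω u))|_Ω` and `0 = D^B_C (Tr2 U) + (S (M^B_Ω u))|_C`,
where `D^B_Ω (Tr2 U) = (-U + P (L(1_Ω U)))|_Ω` and
`D^B_C (Tr2 U) = (-(P (L(1_Ω U))))|_C`. -/
theorem green_formula
    {H1 : Type*} [NormedAddCommGroup H1] [InnerProductSpace ℂ H1] [CompleteSpace H1]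
    {H2 : Type*} [NormedAddCommGroup H2] [InnerProductSpace ℂ H2] [CompleteSpace H2]
    {HO1 HO2 HC1 HC2 : Type*}
    [AddCommGroup HO1] [Module ℂ HO1] [AddCommGroup HO2] [Module ℂ HO2]
    [AddCommGroup HC1] [Module ℂ HC1] [AddCommGroup HC2] [Module ℂ HC2]
    {D1 D2 : Type*} [NormedAddCommGroup D1] [NormedSpace ℂ D1]
    [AddCommGroup D2] [Module ℂ D2]
    (B : H1 →ₗ[ℂ] H2 →ₗ[ℂ] ℂ) (Cb lam : ℝ)
    (hCb : ∀ (φ : H1) (v : H2), ‖B φ v‖ ≤ Cb * ‖φ‖ * ‖v‖)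
    (hlam : 0 < lam)
    (hcoer1 : ∀ v : H2, lam * ‖v‖ ≤ ⨆ w : {w : H1 // w ≠ 0}, ‖B w.1 v‖ / ‖w.1‖)
    (hcoer2 : ∀ φ : H1, lam * ‖φ‖ ≤ ⨆ w : {w : H2 // w ≠ 0}, ‖B φ w.1‖ / ‖w.1‖)
    (RO1 : H1 →ₗ[ℂ] HO1) (RO2 : H2 →ₗ[ℂ] HO2)
    (RC1 : H1 →ₗ[ℂ] HC1) (RC2 : H2 →ₗ[ℂ] HC2)
    (BO : HO1 →ₗ[ℂ] HO2 →ₗ[ℂ] ℂ) (BC : HC1 →ₗ[ℂ] HC2 →ₗ[ℂ] ℂ)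
    (hsplit : ∀ (φ : H1) (v : H2), B φ v = BO (RO1 φ) (RO2 v) + BC (RC1 φ) (RC2 v))
    (Tr1 : H1 →ₗ[ℂ] D1) (Tr2 : H2 →ₗ[ℂ] D2)
    (P : (H1 →L[ℂ] ℂ) → H2)
    (hP : ∀ (H : H1 →L[ℂ] ℂ) (φ : H1), B φ (P H) = H φ)
    (u : HO2) (U : H2) (hU : RO2 U = u)
    (hu : ∀ φ : H1, Tr1 φ = 0 → BO (RO1 φ) u = 0)
    (Mu : D1 →L[ℂ] ℂ)
    (hMu : ∀ φ : H1, Mu (Tr1 φ) = BO (RO1 φ) u)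
    (SMu : H2)
    (hSMu : ∀ φ : H1, B φ SMu = Mu (Tr1 φ))
    (LOU : H1 →L[ℂ] ℂ)
    (hLOU : ∀ φ : H1, LOU φ = BO (RO1 φ) (RO2 U)) :
    u = -(RO2 (-U + P LOU)) + RO2 SMu ∧
      (0 : HC2) = RC2 (-(P LOU)) + RC2 SMu := by

  have key : P LOU = SMu := by
    have hz : ∀ φ : H1, B φ (P LOU - SMu) = 0 := by
      intro φ
      have : B φ (P LOU) = B φ SMu := by
        rw [hP, hLOU, hU, ← hMu, ← hSMu]
      simp [map_sub, this]
    have h2 : (⨆ w : {w : H1 // w ≠ 0}, ‖B w.1 (P LOU - SMu)‖ / ‖w.1‖) ≤ 0 :=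
      Real.iSup_nonpos (fun w => by simp [hz])
    have h3 : lam * ‖P LOU - SMu‖ ≤ 0 := (hcoer1 (P LOU - SMu)).trans h2
    have h4 : ‖P LOU - SMu‖ ≤ 0 := by nlinarith [norm_nonneg (P LOU - SMu)]
    have h5 : P LOU - SMu = 0 := by rwa [← norm_le_zero_iff]
    exact sub_eq_zero.mp h5
  constructor
  · rw [key]
    simp [map_add, map_neg, hU]
  · rw [key]
    simp
end

section
/- Adjoint relation for double layer potentials: with B*(φ,ψ) = conj(B(ψ,φ)) and the associated potentials D^{B*}_Ω : D1 → H1^Ω, for all f ∈ D2 and φ ∈ D1 one has ⟨φ, M^B_Ω(D^B_Ω f)⟩ = ⟨M^{B*}_Ω(D^{B*}_Ω φ), f⟩. -/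
/-- Adjoint relation for double layer potentials: with `B*(ψ,φ) = conj (B φ ψ)` and the
associated Newton potentials `P`, `P*` and double layer potentials
`D^B_Ω f = (-F + P (L(1_Ω F)))|_Ω` (for `Tr2 F = f`) and
`D^{B*}_Ω φ = (-Φ + P* (L*(1_Ω Φ)))|_Ω` (for `Tr1 Φ = φ`), the Neumann traces satisfy
`⟨φ, M^B_Ω (D^B_Ω f)⟩ = ⟨M^{B*}_Ω (D^{B*}_Ω φ), f⟩`, i.e.
`MDf (Tr1 Φ) = conj (MDφ (Tr2 F))` (the duality pairings being sesquilinear). -/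
theorem double_layer_adjoint_relation
    {H1 : Type*} [NormedAddCommGroup H1] [InnerProductSpace ℂ H1] [CompleteSpace H1]
    {H2 : Type*} [NormedAddCommGroup H2] [InnerProductSpace ℂ H2] [CompleteSpace H2]
    {HO1 HO2 : Type*}
    [AddCommGroup HO1] [Module ℂ HO1] [AddCommGroup HO2] [Module ℂ HO2]
    {D1 D2 : Type*} [NormedAddCommGroup D1] [NormedSpace ℂ D1]
    [NormedAddCommGroup D2] [NormedSpace ℂ D2]
    (B : H1 →ₗ[ℂ] H2 →ₗ[ℂ] ℂ)
    (RO1 : H1 →ₗ[ℂ] HO1) (RO2 : H2 →ₗ[ℂ] HO2)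
    (BO : HO1 →ₗ[ℂ] HO2 →ₗ[ℂ] ℂ)
    (Tr1 : H1 →ₗ[ℂ] D1) (Tr2 : H2 →ₗ[ℂ] D2)
    (P : (H1 →L[ℂ] ℂ) → H2)
    (hP : ∀ (H : H1 →L[ℂ] ℂ) (φ : H1), B φ (P H) = H φ)
    (Pstar : (H2 →L[ℂ] ℂ) → H1)
    (hPstar : ∀ (H : H2 →L[ℂ] ℂ) (ψ : H2), (starRingEnd ℂ) (B (Pstar H) ψ) = H ψ)
    (F : H2) (Φ : H1)
    (LOF : H1 →L[ℂ] ℂ) (hLOF : ∀ φ : H1, LOF φ = BO (RO1 φ) (RO2 F))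
    (LsOΦ : H2 →L[ℂ] ℂ)
    (hLsOΦ : ∀ ψ : H2, LsOΦ ψ = (starRingEnd ℂ) (BO (RO1 Φ) (RO2 ψ)))
    (MDf : D1 →L[ℂ] ℂ)
    (hMDf : ∀ φ : H1, MDf (Tr1 φ) = BO (RO1 φ) (RO2 (-F + P LOF)))
    (MDφ : D2 →L[ℂ] ℂ)
    (hMDφ : ∀ ψ : H2,
      MDφ (Tr2 ψ) = (starRingEnd ℂ) (BO (RO1 (-Φ + Pstar LsOΦ)) (RO2 ψ))) :
    MDf (Tr1 Φ) = (starRingEnd ℂ) (MDφ (Tr2 F)) := by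
  have key : BO (RO1 Φ) (RO2 (P LOF)) = BO (RO1 (Pstar LsOΦ)) (RO2 F) := by
    have h1 : BO (RO1 Φ) (RO2 (P LOF)) = (starRingEnd ℂ) (LsOΦ (P LOF)) := by
      rw [hLsOΦ]; simp
    have h2 : LsOΦ (P LOF) = (starRingEnd ℂ) (B (Pstar LsOΦ) (P LOF)) := by
      rw [hPstar]
    rw [h1, h2, Complex.conj_conj, hP, hLOF]
  rw [hMDf, hMDφ, Complex.conj_conj]
  simp only [map_add, map_neg, LinearMap.add_apply, LinearMap.neg_apply, map_neg, key]
end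

section
/- Jump relation for the double layer potential: for all f ∈ D2, Tr2^Ω(D^B_Ω f) + Tr2^C(D^B_C f) = −f, where Tr2^Ω D^B_Ω f = −Tr2 F + Tr2 P(L(1_Ω F)) and Tr2^C D^B_C f = −Tr2 F + Tr2 P(L(1_C F)) for any F ∈ H2 with Tr2 F = f. -/
/-- Jump relation for the double layer potential: for all `f ∈ D2`,
`Tr2^Ω (D^B_Ω f) + Tr2^C (D^B_C f) = -f`, where
`Tr2^Ω D^B_Ω f = -Tr2 F + Tr2 (P (L(1_Ω F)))` and
`Tr2^C D^B_C f = -Tr2 F + Tr2 (P (L(1_C F)))` for any `F ∈ H2` with `Tr2 F = f`. -/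
theorem double_layer_jump
    {H1 : Type*} [NormedAddCommGroup H1] [InnerProductSpace ℂ H1] [CompleteSpace H1]
    {H2 : Type*} [NormedAddCommGroup H2] [InnerProductSpace ℂ H2] [CompleteSpace H2]
    {HO1 HO2 HC1 HC2 D2 : Type*}
    [AddCommGroup HO1] [Module ℂ HO1] [AddCommGroup HO2] [Module ℂ HO2]
    [AddCommGroup HC1] [Module ℂ HC1] [AddCommGroup HC2] [Module ℂ HC2]
    [AddCommGroup D2] [Module ℂ D2]
    (B : H1 →ₗ[ℂ] H2 →ₗ[ℂ] ℂ) (Cb lam : ℝ)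
    (hCb : ∀ (φ : H1) (v : H2), ‖B φ v‖ ≤ Cb * ‖φ‖ * ‖v‖)
    (hlam : 0 < lam)
    (hcoer1 : ∀ v : H2, lam * ‖v‖ ≤ ⨆ w : {w : H1 // w ≠ 0}, ‖B w.1 v‖ / ‖w.1‖)
    (hcoer2 : ∀ φ : H1, lam * ‖φ‖ ≤ ⨆ w : {w : H2 // w ≠ 0}, ‖B φ w.1‖ / ‖w.1‖)
    (RO1 : H1 →ₗ[ℂ] HO1) (RO2 : H2 →ₗ[ℂ] HO2)
    (RC1 : H1 →ₗ[ℂ] HC1) (RC2 : H2 →ₗ[ℂ] HC2)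
    (BO : HO1 →ₗ[ℂ] HO2 →ₗ[ℂ] ℂ) (BC : HC1 →ₗ[ℂ] HC2 →ₗ[ℂ] ℂ)
    (hsplit : ∀ (φ : H1) (v : H2), B φ v = BO (RO1 φ) (RO2 v) + BC (RC1 φ) (RC2 v))
    (Tr2 : H2 →ₗ[ℂ] D2)
    (P : (H1 →L[ℂ] ℂ) → H2)
    (hP : ∀ (H : H1 →L[ℂ] ℂ) (φ : H1), B φ (P H) = H φ)
    (L LO LC : H2 → (H1 →L[ℂ] ℂ))
    (hL : ∀ (F : H2) (φ : H1), (L F) φ = B φ F)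
    (hLO : ∀ (F : H2) (φ : H1), (LO F) φ = BO (RO1 φ) (RO2 F))
    (hLC : ∀ (F : H2) (φ : H1), (LC F) φ = BC (RC1 φ) (RC2 F))
    (hPL : ∀ F : H2, P (L F) = F) :
    ∀ (f : D2) (F : H2), Tr2 F = f →
      (-(Tr2 F) + Tr2 (P (LO F))) + (-(Tr2 F) + Tr2 (P (LC F))) = -f := by
  intro f F hF
  set v : H2 := P (LO F) + P (LC F) - F with hv
  have hBv : ∀ φ : H1, B φ v = 0 := by
    intro φ
    have h1 : B φ v = B φ (P (LO F)) + B φ (P (LC F)) - B φ F := by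
      simp [hv, map_add, map_sub]
    rw [h1, hP, hP, hLO, hLC, hsplit]
    ring
  have hsup : (⨆ w : {w : H1 // w ≠ 0}, ‖B w.1 v‖ / ‖w.1‖) = 0 := by
    have hz : ∀ w : {w : H1 // w ≠ 0}, ‖B w.1 v‖ / ‖w.1‖ = 0 := by
      intro w; simp [hBv]
    rcases isEmpty_or_nonempty {w : H1 // w ≠ 0} with h | h
    · exact Real.iSup_of_isEmpty _
    · simp only [hz]; exact ciSup_const
  have h0 : lam * ‖v‖ ≤ 0 := by
    have := hcoer1 v; rwa [hsup] at this
  have hvz : v = 0 := by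
    have hn : ‖v‖ ≤ 0 := by nlinarith [norm_nonneg v]
    exact norm_le_zero_iff.mp hn
  have key : P (LO F) + P (LC F) = F := sub_eq_zero.mp hvz
  have hT := congrArg Tr2 key
  rw [map_add] at hT
  rw [← hF]
  abel_nf
  rw [hT]
  abel
end

section
/- Continuity of the Neumann trace of the double layer potential: for all f ∈ D2, M^B_Ω(D^B_Ω f) = M^B_C(D^B_C f) as elements of N2 = D1*. -/
/-- Continuity of the Neumann trace of the double layer potential: with
`D^B_Ω f = (-F + P (L(1_Ω F)))|_Ω` and `D^B_C f = (-(P (L(1_Ω F))))|_C` for any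
`F ∈ H2` with `Tr2 F = f`, the Neumann traces from the two sides agree:
`M^B_Ω (D^B_Ω f) = M^B_C (D^B_C f)` in `N2 = D1*`. -/
theorem double_layer_neumann_continuity
    {H1 : Type*} [NormedAddCommGroup H1] [InnerProductSpace ℂ H1] [CompleteSpace H1]
    {H2 : Type*} [NormedAddCommGroup H2] [InnerProductSpace ℂ H2] [CompleteSpace H2]
    {HO1 HO2 HC1 HC2 : Type*}
    [AddCommGroup HO1] [Module ℂ HO1] [AddCommGroup HO2] [Module ℂ HO2]
    [AddCommGroup HC1] [Module ℂ HC1] [AddCommGroup HC2] [Module ℂ HC2]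
    {D1 D2 : Type*} [NormedAddCommGroup D1] [NormedSpace ℂ D1]
    [AddCommGroup D2] [Module ℂ D2]
    (B : H1 →ₗ[ℂ] H2 →ₗ[ℂ] ℂ)
    (RO1 : H1 →ₗ[ℂ] HO1) (RO2 : H2 →ₗ[ℂ] HO2)
    (RC1 : H1 →ₗ[ℂ] HC1) (RC2 : H2 →ₗ[ℂ] HC2)
    (BO : HO1 →ₗ[ℂ] HO2 →ₗ[ℂ] ℂ) (BC : HC1 →ₗ[ℂ] HC2 →ₗ[ℂ] ℂ)
    (hsplit : ∀ (φ : H1) (v : H2), B φ v = BO (RO1 φ) (RO2 v) + BC (RC1 φ) (RC2 v))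
    (Tr1 : H1 →ₗ[ℂ] D1) (hsurj1 : Function.Surjective Tr1)
    (Tr2 : H2 →ₗ[ℂ] D2)
    (P : (H1 →L[ℂ] ℂ) → H2)
    (hP : ∀ (H : H1 →L[ℂ] ℂ) (φ : H1), B φ (P H) = H φ)
    (LO : H2 → (H1 →L[ℂ] ℂ))
    (hLO : ∀ (F : H2) (φ : H1), (LO F) φ = BO (RO1 φ) (RO2 F)) :
    ∀ (F : H2) (MO MC : D1 →L[ℂ] ℂ),
      (∀ φ : H1, MO (Tr1 φ) = BO (RO1 φ) (RO2 (-F + P (LO F)))) →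
      (∀ φ : H1, MC (Tr1 φ) = BC (RC1 φ) (RC2 (-(P (LO F))))) →
      MO = MC := by
  intro F MO MC hMO hMC
  ext d
  obtain ⟨φ, rfl⟩ := hsurj1 d
  have h1 := hsplit φ (P (LO F))
  rw [hP, hLO] at h1
  rw [hMO, hMC]
  simp only [map_neg, map_add, LinearMap.add_apply, LinearMap.neg_apply]
  linear_combination -h1
end
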